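/- Let H be a complex Hilbert space, W an isometry on H, and let U and V be the isometries on K = lp (fun _ : List (Fin d) => H) 2 determined by U(single σ h) = single (act 1 σ) (W^{carry 1 σ} h) and V(single σ h) = single (0 :: σ) h. Then (i) V U^c = U^d V; (ii) U* V = U^{d-1} V (U*)^c; and (iii) V* U^j V = 0 for every integer j with 1 ≤ j < d. -/
import Mathlib

open scoped Classical

namespace BSpaper

/-- `act m σ`: the result of pulling `b^m` through the stem with digit string `σ`
in `BS(c,d)` (acting on the digits). -/
def act (c : ℕ) {d : ℕ} : ℕ → List (Fin d) → List (Fin d)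
  | _, [] => []
  | m, i :: σ => ⟨(m + (i : ℕ)) % d, Nat.mod_lt _ i.pos⟩ :: act c (c * ((m + (i : ℕ)) / d)) σ

/-- `carry m σ`: the power of `b` emerging on the right when `b^m` is pulled through the
stem with digit string `σ`. -/
def carry (c : ℕ) {d : ℕ} : ℕ → List (Fin d) → ℕ
  | m, [] => m
  | m, i :: σ => carry c (c * ((m + (i : ℕ)) / d)) σ

lemma act_zero {c d : ℕ} (σ : List (Fin d)) : act c 0 σ = σ := by
  induction σ with
  | nil => rfl
  | cons i σ ih =>
      simp [act, Nat.mod_eq_of_lt i.isLt, Nat.div_eq_of_lt i.isLt, ih]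

lemma carry_zero {c d : ℕ} (σ : List (Fin d)) : carry c 0 σ = 0 := by
  induction σ with
  | nil => rfl
  | cons i σ ih =>
      simp [carry, Nat.div_eq_of_lt i.isLt, ih]

lemma mod_aux {d : ℕ} (m k : ℕ) : (m + k % d) % d = (m + k) % d := by
  conv_rhs => rw [← Nat.mod_add_div k d, ← Nat.add_assoc, Nat.add_mul_mod_self_left]

lemma div_aux {d : ℕ} (hd : 0 < d) (m k : ℕ) : (m + k % d) / d + k / d = (m + k) / d := by
  conv_rhs => rw [← Nat.mod_add_div k d, ← Nat.add_assoc, Nat.add_mul_div_left _ _ hd]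

lemma act_act {c d : ℕ} (m n : ℕ) (σ : List (Fin d)) :
    act c m (act c n σ) = act c (m + n) σ := by
  induction σ generalizing m n with
  | nil => rfl
  | cons i σ ih =>
      have hd : 0 < d := i.pos
      have hmod : (m + (n + (i : ℕ)) % d) % d = (m + n + (i : ℕ)) % d := by
        rw [mod_aux, Nat.add_assoc]
      have hdiv : c * ((m + (n + (i : ℕ)) % d) / d) + c * ((n + (i : ℕ)) / d)
          = c * ((m + n + (i : ℕ)) / d) := by
        rw [← Nat.mul_add, div_aux hd, Nat.add_assoc]
      simp only [act]
      refine congrArg₂ _ (by simp [hmod]) ?_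
      rw [ih, hdiv]

lemma carry_act {c d : ℕ} (m n : ℕ) (σ : List (Fin d)) :
    carry c m (act c n σ) + carry c n σ = carry c (m + n) σ := by
  induction σ generalizing m n with
  | nil => rfl
  | cons i σ ih =>
      have hd : 0 < d := i.pos
      have hdiv : c * ((m + (n + (i : ℕ)) % d) / d) + c * ((n + (i : ℕ)) / d)
          = c * ((m + n + (i : ℕ)) / d) := by
        rw [← Nat.mul_add, div_aux hd, Nat.add_assoc]
      simp only [act, carry]
      rw [ih, hdiv]

lemma digit_inj {d : ℕ} {i j : Fin d} {m : ℕ}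
    (h : (m + (i : ℕ)) % d = (m + (j : ℕ)) % d) : i = j := by
  have key : ∀ {i j : Fin d}, (i : ℕ) ≤ (j : ℕ) →
      (m + (i : ℕ)) % d = (m + (j : ℕ)) % d → i = j := by
    intro i j hle hh
    have hdvd : d ∣ (m + (j : ℕ)) - (m + (i : ℕ)) :=
      (Nat.modEq_iff_dvd' (by omega)).mp hh
    have hlt : (m + (j : ℕ)) - (m + (i : ℕ)) < d := by
      have := j.isLt; omega
    have hz := Nat.eq_zero_of_dvd_of_lt hdvd hlt
    exact Fin.ext (by omega)
  rcases le_total (i : ℕ) (j : ℕ) with hle | hle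
  · exact key hle h
  · exact (key hle h.symm).symm

lemma act_inj {c d : ℕ} : ∀ (σ τ : List (Fin d)) (m : ℕ), act c m σ = act c m τ → σ = τ := by
  intro σ
  induction σ with
  | nil => intro τ m h; cases τ with
    | nil => rfl
    | cons j τ => simp [act] at h
  | cons i σ ih =>
      intro τ m h
      cases τ with
      | nil => simp [act] at h
      | cons j τ =>
          simp only [act, List.cons.injEq, Fin.mk.injEq] at h
          obtain ⟨h1, h2⟩ := h
          have hij : i = j := digit_inj h1
          subst hij
          exact congrArg _ (ih τ _ h2)

lemma ext_single {d : ℕ} {H : Type*} [NormedAddCommGroup H] [InnerProductSpace ℂ H]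
    {E : Type*} [NormedAddCommGroup E] [NormedSpace ℂ E]
    {T S : lp (fun _ : List (Fin d) => H) 2 →L[ℂ] E}
    (h : ∀ (σ : List (Fin d)) (g : H), T (lp.single 2 σ g) = S (lp.single 2 σ g)) :
    T = S := by
  ext x
  have hx : HasSum (fun σ : List (Fin d) => lp.single 2 σ (x σ)) x :=
    lp.hasSum_single ENNReal.ofNat_ne_top x
  have h2 : HasSum (fun σ : List (Fin d) => T (lp.single 2 σ (x σ))) (S x) := by
    simpa only [h] using hx.mapL S
  exact (hx.mapL T).unique h2

open scoped InnerProductSpace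

open ContinuousLinearMap in
/-- Let W be an isometry on H and let U, V be the isometries on
K = lp (fun _ : List (Fin d) => H) 2 determined by
U (single σ h) = single (act 1 σ) (W^(carry 1 σ) h) and V (single σ h) = single (0 :: σ) h.
Then (i) V U^c = U^d V; (ii) U* V = U^(d-1) V (U*)^c; and (iii) V* U^j V = 0 for 1 ≤ j < d. -/
theorem statement15 (c d : ℕ) (hc : 0 < c) (hd : 0 < d)
    {H : Type*} [NormedAddCommGroup H] [InnerProductSpace ℂ H] [CompleteSpace H]
    (W : H →L[ℂ] H) (hW : adjoint W * W = 1)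
    (U V : lp (fun _ : List (Fin d) => H) 2 →L[ℂ] lp (fun _ : List (Fin d) => H) 2)
    (hUiso : adjoint U * U = 1) (hViso : adjoint V * V = 1)
    (hU : ∀ (σ : List (Fin d)) (h : H),
      U (lp.single 2 σ h) = lp.single 2 (act c 1 σ) ((W ^ carry c 1 σ) h))
    (hV : ∀ (σ : List (Fin d)) (h : H),
      V (lp.single 2 σ h) = lp.single 2 ((⟨0, hd⟩ : Fin d) :: σ) h) :
    V * U ^ c = U ^ d * V ∧
    adjoint U * V = U ^ (d - 1) * V * adjoint U ^ c ∧
    ∀ j : ℕ, 1 ≤ j → j < d → adjoint V * U ^ j * V = 0 := by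
  classical
  -- action of powers of U on basis vectors
  have hUpow : ∀ (m : ℕ) (σ : List (Fin d)) (h : H),
      (U ^ m) (lp.single 2 σ h) = lp.single 2 (act c m σ) ((W ^ carry c m σ) h) := by
    intro m
    induction m with
    | zero => intro σ h; simp [act_zero, carry_zero]
    | succ n ih =>
        intro σ h
        rw [pow_succ' U n, ContinuousLinearMap.mul_apply, ih, hU, act_act]
        have e1 : n + 1 = 1 + n := Nat.add_comm n 1
        rw [e1, ← carry_act (c:=c) 1 n σ, pow_add, ContinuousLinearMap.mul_apply]
  have hpow_adj : ∀ (T : lp (fun _ : List (Fin d) => H) 2 →L[ℂ]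
      lp (fun _ : List (Fin d) => H) 2) (m : ℕ), adjoint T ^ m = adjoint (T ^ m) := by
    intro T m
    rw [← ContinuousLinearMap.star_eq_adjoint, ← ContinuousLinearMap.star_eq_adjoint, star_pow]
  have hWpow_adj : ∀ m : ℕ, adjoint W ^ m = adjoint (W ^ m) := by
    intro m
    rw [← ContinuousLinearMap.star_eq_adjoint, ← ContinuousLinearMap.star_eq_adjoint, star_pow]
  -- separation via inner products against basis vectors
  have sep : ∀ (y z : lp (fun _ : List (Fin d) => H) 2),
      (∀ (σ : List (Fin d)) (g : H),
        ⟪y, lp.single 2 σ g⟫_ℂ = ⟪z, lp.single 2 σ g⟫_ℂ) → y = z := by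
    intro y z h
    refine ext_inner_right ℂ fun v => ?_
    have h2 : (innerSL ℂ y : lp (fun _ : List (Fin d) => H) 2 →L[ℂ] ℂ) = innerSL ℂ z :=
      ext_single (fun σ g => h σ g)
    exact congrArg (fun (T : lp (fun _ : List (Fin d) => H) 2 →L[ℂ] ℂ) => T v) h2
  -- adjoint powers of U on basis vectors in the range of act
  have hAdjPow : ∀ (m : ℕ) (τ : List (Fin d)) (k : H),
      (adjoint U ^ m) (lp.single 2 (act c m τ) k)
        = lp.single 2 τ ((adjoint W ^ carry c m τ) k) := by
    intro m τ k
    rw [hpow_adj]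
    apply sep
    intro σ g
    rw [ContinuousLinearMap.adjoint_inner_left, hUpow, lp.inner_single_left,
      lp.inner_single_left]
    by_cases hστ : σ = τ
    · subst hστ
      rw [lp.single_apply_self, lp.single_apply_self, hWpow_adj,
        ContinuousLinearMap.adjoint_inner_left]
    · have h1 : act c m τ ≠ act c m σ := fun hh => hστ (act_inj τ σ m hh).symm
      rw [lp.single_apply_ne _ _ _ h1, lp.single_apply_ne _ _ _ (fun hh => hστ hh.symm)]
      simp
  have hAdjPow0 : ∀ (m : ℕ) (ρ : List (Fin d)) (k : H), (∀ τ, ρ ≠ act c m τ) →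
      (adjoint U ^ m) (lp.single 2 ρ k) = 0 := by
    intro m ρ k hρ
    rw [hpow_adj]
    apply sep
    intro σ g
    rw [ContinuousLinearMap.adjoint_inner_left, hUpow, lp.inner_single_left,
      lp.single_apply_ne _ _ _ (hρ σ)]
    simp
  have hAdj1 : ∀ (τ : List (Fin d)) (k : H),
      adjoint U (lp.single 2 (act c 1 τ) k)
        = lp.single 2 τ ((adjoint W ^ carry c 1 τ) k) := by
    intro τ k
    have := hAdjPow 1 τ k
    rwa [pow_one] at this
  have hAdj10 : ∀ (ρ : List (Fin d)) (k : H), (∀ τ, ρ ≠ act c 1 τ) →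
      adjoint U (lp.single 2 ρ k) = 0 := by
    intro ρ k hρ
    have := hAdjPow0 1 ρ k hρ
    rwa [pow_one] at this
  -- adjoint of V on basis vectors
  have hVadj : ∀ (σ : List (Fin d)) (h : H),
      adjoint V (lp.single 2 ((⟨0, hd⟩ : Fin d) :: σ) h) = lp.single 2 σ h := by
    intro σ h
    rw [← hV]
    calc adjoint V (V (lp.single 2 σ h)) = (adjoint V * V) (lp.single 2 σ h) := rfl
      _ = lp.single 2 σ h := by rw [hViso]; rfl
  have hVadj0 : ∀ (ρ : List (Fin d)) (k : H), (∀ σ, ρ ≠ (⟨0, hd⟩ : Fin d) :: σ) →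
      adjoint V (lp.single 2 ρ k) = 0 := by
    intro ρ k hρ
    apply sep
    intro σ g
    rw [ContinuousLinearMap.adjoint_inner_left, hV, lp.inner_single_left,
      lp.single_apply_ne _ _ _ (hρ σ)]
    simp
  refine ⟨?_, ?_, ?_⟩
  · -- part (i)
    apply ext_single
    intro σ h
    rw [ContinuousLinearMap.mul_apply, ContinuousLinearMap.mul_apply, hUpow, hV, hV, hUpow]
    have e1 : act c d ((⟨0, hd⟩ : Fin d) :: σ) = (⟨0, hd⟩ : Fin d) :: act c c σ := by
      simp [act, Nat.mod_self, Nat.div_self hd]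
    have e2 : carry c d ((⟨0, hd⟩ : Fin d) :: σ) = carry c c σ := by
      simp [carry, Nat.div_self hd]
    rw [e1, e2]
  · -- part (ii)
    apply ext_single
    intro σ h
    rw [ContinuousLinearMap.mul_apply, ContinuousLinearMap.mul_apply,
      ContinuousLinearMap.mul_apply, hV]
    by_cases hσ : ∃ σ', σ = act c c σ'
    · obtain ⟨σ', rfl⟩ := hσ
      have hdm : (1 + (d - 1)) = d := by omega
      have hfin : (d - 1) < d := by omega
      have hL : (⟨0, hd⟩ : Fin d) :: act c c σ'
          = act c 1 ((⟨d - 1, hfin⟩ : Fin d) :: σ') := by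
        simp [act, hdm, Nat.mod_self, Nat.div_self hd]
      have hcar : carry c 1 ((⟨d - 1, hfin⟩ : Fin d) :: σ') = carry c c σ' := by
        simp [carry, hdm, Nat.div_self hd]
      rw [hL, hAdj1 _ h, hcar, hAdjPow c σ' h, hV, hUpow]
      have e3 : act c (d - 1) ((⟨0, hd⟩ : Fin d) :: σ') = (⟨d - 1, hfin⟩ : Fin d) :: σ' := by
        simp [act, Nat.mod_eq_of_lt hfin, Nat.div_eq_of_lt hfin, act_zero]
      have e4 : carry c (d - 1) ((⟨0, hd⟩ : Fin d) :: σ') = 0 := by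
        simp [carry, Nat.div_eq_of_lt hfin, carry_zero]
      rw [e3, e4, pow_zero, ContinuousLinearMap.one_apply]
    · have hL0 : ∀ τ, (⟨0, hd⟩ : Fin d) :: σ ≠ act c 1 τ := by
        intro τ hτ
        cases τ with
        | nil => simp [act] at hτ
        | cons j τ' =>
            simp only [act, List.cons.injEq, Fin.mk.injEq] at hτ
            obtain ⟨h1, h2⟩ := hτ
            have hdvd : d ∣ 1 + (j : ℕ) := Nat.dvd_of_mod_eq_zero h1.symm
            have hle : d ≤ 1 + (j : ℕ) := Nat.le_of_dvd (by omega) hdvd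
            have heq : 1 + (j : ℕ) = d := by have := j.isLt; omega
            rw [heq, Nat.div_self hd, Nat.mul_one] at h2
            exact hσ ⟨τ', h2⟩
      rw [hAdj10 _ h hL0, hAdjPow0 c σ h (fun τ hτ => hσ ⟨τ, hτ⟩), map_zero, map_zero]
  · -- part (iii)
    intro j hj1 hjd
    apply ext_single
    intro σ h
    rw [ContinuousLinearMap.mul_apply, ContinuousLinearMap.mul_apply, hV, hUpow]
    have e : act c j ((⟨0, hd⟩ : Fin d) :: σ) = (⟨j, hjd⟩ : Fin d) :: σ := by
      simp [act, Nat.mod_eq_of_lt hjd, Nat.div_eq_of_lt hjd, act_zero]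
    rw [e, hVadj0 _ _ (by intro σ' hh; simp only [List.cons.injEq, Fin.mk.injEq] at hh; omega),
      ContinuousLinearMap.zero_apply]

end BSpaper
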